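/- arXiv:2509.17827 — 8 statements merged into one kernel-verified Lean document; each statement's English description precedes it below -/
import Mathlib

section
/- Let K be a symmetric real 3x3 matrix, w0 in R^3 a unit vector, and theta, thetabar real numbers. Then trace( K * exp((theta - thetabar) * hat(w0)) ) = w0^T K w0 + ( trace(K) - w0^T K w0 ) * cos(theta - thetabar). Consequently, for a matrix Fisher distribution M(F) with proper right polar decomposition F = M K whose mean attitude M lies in S_{M0}(w0), the density of R(theta) = M0 * exp(theta * hat(w0)) is proportional to exp[ (trace(K) - w0^T K w0) * cos(theta - thetabar) ], where thetabar = w0 . log(M0 M^T)^vee. (Theorem 1.) -/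
open Matrix

noncomputable section

/-- `SO3 R` means `R` is a rotation matrix: `Rᵀ R = I₃` and `det R = 1`. -/
def SO3 (R : Matrix (Fin 3) (Fin 3) ℝ) : Prop :=
  Rᵀ * R = 1 ∧ R.det = 1

/-- The hat map sending `w ∈ ℝ³` to the skew-symmetric matrix
`[[0,-w3,w2],[w3,0,-w1],[-w2,w1,0]]`. -/
def hat (w : Fin 3 → ℝ) : Matrix (Fin 3) (Fin 3) ℝ :=
  !![0, -w 2, w 1; w 2, 0, -w 0; -w 1, w 0, 0]

/-! For a unit axis `w`, `(hat w)³ = -hat w`, so the exponential series of `φ • hat w` splits into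
an even part summing to `1 + (1 - cos φ) (hat w)²` and an odd part summing to `sin φ • hat w`; with
`(hat w)² = w wᵀ - I` this is Rodrigues' formula. Against a symmetric `K` the skew-symmetric term
has zero trace and `tr (K w wᵀ) = wᵀ K w`, giving the trace identity. For the density, `M₀` is
orthogonal and `hat w` is skew, so `(M₀ exp(θ̄ hat w) K)ᵀ M₀ exp(θ hat w) = K exp((θ - θ̄) hat w)`. -/

section Rodrigues

variable {𝔸 : Type*} [Ring 𝔸] [Algebra ℝ 𝔸] {A : 𝔸}

theorem pow_two_mul_add_one_of_mul_mul_self_eq_neg (hA : A * A * A = -A) (k : ℕ) :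
    A ^ (2 * k + 1) = ((-1 : ℝ) ^ k) • A := by
  induction k with
  | zero => simp
  | succ k ih =>
    rw [show 2 * (k + 1) + 1 = 2 * k + 1 + 2 by ring, pow_add, ih, sq, smul_mul_assoc,
      ← mul_assoc, hA, pow_succ, mul_neg_one, neg_smul, smul_neg]

theorem pow_two_mul_add_two_of_mul_mul_self_eq_neg (hA : A * A * A = -A) (k : ℕ) :
    A ^ (2 * k + 2) = ((-1 : ℝ) ^ k) • (A * A) := by
  rw [pow_succ, pow_two_mul_add_one_of_mul_mul_self_eq_neg hA, smul_mul_assoc]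

variable [TopologicalSpace 𝔸] [IsTopologicalRing 𝔸] [ContinuousSMul ℝ 𝔸] [T2Space 𝔸]

theorem NormedSpace.exp_smul_of_mul_mul_self_eq_neg (hA : A * A * A = -A) (φ : ℝ) :
    NormedSpace.exp (φ • A) = 1 + Real.sin φ • A + (1 - Real.cos φ) • (A * A) := by
  have hfact (n : ℕ) : (n.factorial : ℝ) ≠ 0 := Nat.cast_ne_zero.mpr n.factorial_ne_zero
  have heven : HasSum (fun k : ℕ => ((2 * k).factorial⁻¹ : ℝ) • (φ • A) ^ (2 * k))
      ((1 + A * A) - Real.cos φ • (A * A)) := by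
    have h := (hasSum_ite_eq 0 (1 + A * A)).sub ((Real.hasSum_cos φ).smul_const (A * A))
    refine h.congr_fun fun k => ?_
    rcases k with _ | k
    · simp
    rw [smul_pow, show 2 * (k + 1) = 2 * k + 2 by ring,
      pow_two_mul_add_two_of_mul_mul_self_eq_neg hA, smul_smul, smul_smul, if_neg k.succ_ne_zero,
      zero_sub, ← neg_smul]
    congr 1
    field_simp [hfact]
    ring
  have hodd : HasSum (fun k : ℕ => ((2 * k + 1).factorial⁻¹ : ℝ) • (φ • A) ^ (2 * k + 1))
      (Real.sin φ • A) := by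
    refine ((Real.hasSum_sin φ).smul_const A).congr_fun fun k => ?_
    rw [smul_pow, pow_two_mul_add_one_of_mul_mul_self_eq_neg hA, smul_smul, smul_smul]
    congr 1
    field_simp [hfact]
  rw [NormedSpace.exp_eq_tsum ℝ]
  refine HasSum.tsum_eq ?_
  convert HasSum.even_add_odd (f := fun n : ℕ => (n.factorial⁻¹ : ℝ) • (φ • A) ^ n) heven hodd
    using 1
  module

end Rodrigues

section Trace

variable {n R : Type*} [Fintype n]

theorem Matrix.trace_mul_vecMulVec_self [CommSemiring R] (K : Matrix n n R) (w : n → R) :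
    trace (K * vecMulVec w w) = w ⬝ᵥ K *ᵥ w := by
  rw [mul_vecMulVec, trace_vecMulVec, dotProduct_comm]

theorem Matrix.trace_mul_eq_zero_of_transpose_eq_neg [CommRing R] [IsAddTorsionFree R]
    {K A : Matrix n n R} (hK : Kᵀ = K) (hA : Aᵀ = -A) : trace (K * A) = 0 := by
  refine self_eq_neg.mp ?_
  conv_lhs => rw [← trace_transpose, transpose_mul, hA, hK, neg_mul, trace_neg, trace_mul_comm]

end Trace

theorem hat_transpose (w : Fin 3 → ℝ) : (hat w)ᵀ = -hat w := by
  ext i j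
  fin_cases i <;> fin_cases j <;> simp [hat]

theorem hat_mulVec_self (w : Fin 3 → ℝ) : hat w *ᵥ w = 0 := by
  ext i
  fin_cases i <;> simp [hat, mulVec, dotProduct, Fin.sum_univ_succ] <;> ring

theorem hat_mul_hat (w : Fin 3 → ℝ) : hat w * hat w = vecMulVec w w - (w ⬝ᵥ w) • 1 := by
  ext i j
  fin_cases i <;> fin_cases j <;>
    simp [hat, mul_apply, vecMulVec, dotProduct, Fin.sum_univ_succ] <;> ring

theorem hat_mul_hat_mul_hat (w : Fin 3 → ℝ) : hat w * hat w * hat w = -(w ⬝ᵥ w) • hat w := by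
  rw [mul_assoc, hat_mul_hat, mul_sub, mul_vecMulVec, hat_mulVec_self, zero_vecMulVec,
    Matrix.mul_smul, mul_one, zero_sub, neg_smul]

theorem exp_smul_hat {w : Fin 3 → ℝ} (hw : w ⬝ᵥ w = 1) (φ : ℝ) :
    NormedSpace.exp (φ • hat w) =
      Real.cos φ • 1 + Real.sin φ • hat w + (1 - Real.cos φ) • vecMulVec w w := by
  have hcube : hat w * hat w * hat w = -hat w := by
    rw [hat_mul_hat_mul_hat, hw, neg_smul, one_smul]
  rw [NormedSpace.exp_smul_of_mul_mul_self_eq_neg hcube, hat_mul_hat, hw, one_smul]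
  module

theorem trace_mul_exp_smul_hat {K : Matrix (Fin 3) (Fin 3) ℝ} (hK : Kᵀ = K) {w : Fin 3 → ℝ}
    (hw : w ⬝ᵥ w = 1) (φ : ℝ) :
    trace (K * NormedSpace.exp (φ • hat w)) =
      w ⬝ᵥ K *ᵥ w + (trace K - w ⬝ᵥ K *ᵥ w) * Real.cos φ := by
  rw [exp_smul_hat hw, mul_add, mul_add, trace_add, trace_add, Matrix.mul_smul, Matrix.mul_smul,
    Matrix.mul_smul, trace_smul, trace_smul, trace_smul, mul_one, trace_mul_vecMulVec_self,
    trace_mul_eq_zero_of_transpose_eq_neg hK (hat_transpose w), smul_eq_mul, smul_eq_mul,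
    smul_eq_mul]
  ring

theorem transpose_exp_smul_hat (w : Fin 3 → ℝ) (φ : ℝ) :
    (NormedSpace.exp (φ • hat w))ᵀ = NormedSpace.exp ((-φ) • hat w) := by
  rw [← exp_transpose, transpose_smul, hat_transpose, smul_neg, neg_smul]

theorem exp_smul_hat_mul_exp_smul_hat (w : Fin 3 → ℝ) (φ ψ : ℝ) :
    NormedSpace.exp (φ • hat w) * NormedSpace.exp (ψ • hat w) =
      NormedSpace.exp ((φ + ψ) • hat w) := by
  rw [add_smul, exp_add_of_commute _ _ (((Commute.refl _).smul_left φ).smul_right ψ)]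

theorem transpose_mul_mul_exp_smul_hat {M₀ K : Matrix (Fin 3) (Fin 3) ℝ} (hM₀ : M₀ᵀ * M₀ = 1)
    (hK : Kᵀ = K) (w : Fin 3 → ℝ) (φ ψ : ℝ) :
    (M₀ * NormedSpace.exp (φ • hat w) * K)ᵀ * (M₀ * NormedSpace.exp (ψ • hat w)) =
      K * NormedSpace.exp ((ψ - φ) • hat w) := by
  rw [transpose_mul, transpose_mul, hK, transpose_exp_smul_hat, Matrix.mul_assoc,
    Matrix.mul_assoc, ← Matrix.mul_assoc M₀ᵀ, hM₀, Matrix.one_mul, exp_smul_hat_mul_exp_smul_hat,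
    neg_add_eq_sub]

/-- Theorem 1: for symmetric `K` and a unit axis `w0`,
`tr(K exp((θ-θ̄) hat w0)) = w0ᵀKw0 + (tr K - w0ᵀKw0) cos(θ-θ̄)`; consequently, for the matrix
Fisher distribution with parameter `F = M K` whose mean attitude `M = M0 exp(θ̄ hat w0)` lies in
the single-axis subset `S_{M0}(w0)`, the (unnormalized) density
`etr(Fᵀ R(θ))` of `R(θ) = M0 exp(θ hat w0)` is proportional to
`exp[(tr K - w0ᵀKw0) cos(θ-θ̄)]`, with proportionality constant `exp(w0ᵀKw0)`. -/
theorem stmt1 (K : Matrix (Fin 3) (Fin 3) ℝ) (hK : Kᵀ = K)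
    (w0 : Fin 3 → ℝ) (hw0 : w0 ⬝ᵥ w0 = 1)
    (M0 : Matrix (Fin 3) (Fin 3) ℝ) (hM0 : SO3 M0)
    (thetabar : ℝ) (M : Matrix (Fin 3) (Fin 3) ℝ)
    (hM : M = M0 * NormedSpace.exp (thetabar • hat w0)) (theta : ℝ) :
    Matrix.trace (K * NormedSpace.exp ((theta - thetabar) • hat w0)) =
      w0 ⬝ᵥ K.mulVec w0 +
        (Matrix.trace K - w0 ⬝ᵥ K.mulVec w0) * Real.cos (theta - thetabar) ∧
    Real.exp (Matrix.trace ((M * K)ᵀ * (M0 * NormedSpace.exp (theta • hat w0)))) =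
      Real.exp (w0 ⬝ᵥ K.mulVec w0) *
        Real.exp ((Matrix.trace K - w0 ⬝ᵥ K.mulVec w0) * Real.cos (theta - thetabar)) := by
  have htrace := trace_mul_exp_smul_hat hK hw0 (theta - thetabar)
  refine ⟨htrace, ?_⟩
  rw [hM, transpose_mul_mul_exp_smul_hat hM0.1 hK, htrace, Real.exp_add]
end
end

section
/- Define, for k > 0 and Dtheta in [-pi, pi] with 1 + k^2 + 2k*cos(Dtheta) > 0, the function Dtheta_plus(k, Dtheta) = sign(Dtheta) * arccos( (1 + k*cos(Dtheta)) / sqrt(1 + k^2 + 2k*cos(Dtheta)) ) - (k/(1+k)) * Dtheta. Then: (i) Dtheta_plus(k, Dtheta) > 0 whenever k > 1 and 0 < Dtheta <= pi; (ii) Dtheta_plus(k, Dtheta) < 0 whenever 0 < k < 1 and 0 < Dtheta <= pi; (iii) Dtheta_plus(k, Dtheta) < 0 whenever k > 1 and -pi <= Dtheta < 0; (iv) Dtheta_plus(k, Dtheta) > 0 whenever 0 < k < 1 and -pi <= Dtheta < 0. (Proposition 9, sign properties.) -/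
/-!
For `0 < θ < π`, write `t = θ / 2` and `c = (k - 1) / (k + 1)`. Factoring `e^{it}` out of
`1 + k e^{iθ}` leaves `(k + 1) cos t + i (k - 1) sin t`, so the arccos term (the argument of
`1 + k e^{iθ}`) equals `t + arctan (c tan t)`, while `k / (1 + k) * θ = t + c t`. Hence
`DthetaPlus k θ = arctan (c tan t) - c t`, whose sign is that of `c` because
`tan (c t) < c tan t` for `0 < c < 1` (the function `c tan s - tan (c s)` vanishes at `0` and is
increasing since `cos s < cos (c s)`). The case `θ = π` is computed directly, and negative `θ`
follows since `DthetaPlus k` is odd.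
-/

noncomputable section

/-- The difference between the posterior mean angle of the MFD-based Bayesian filter and that
of the CGD-based Bayesian filter. -/
def DthetaPlus (k Dtheta : ℝ) : ℝ :=
  Real.sign Dtheta *
      Real.arccos ((1 + k * Real.cos Dtheta) /
        Real.sqrt (1 + k ^ 2 + 2 * k * Real.cos Dtheta)) -
    k / (1 + k) * Dtheta

open Real Set

lemma cos_add_arctan_div {a : ℝ} (ha : 0 < a) (b t : ℝ) :
    cos (t + arctan (b / a)) = (a * cos t - b * sin t) / √(a ^ 2 + b ^ 2) := by
  have hsqrt : √(1 + (b / a) ^ 2) = √(a ^ 2 + b ^ 2) / a := by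
    rw [show 1 + (b / a) ^ 2 = (a ^ 2 + b ^ 2) / a ^ 2 by field_simp,
      sqrt_div' _ (sq_nonneg a), sqrt_sq ha.le]
  have hpos : 0 < √(a ^ 2 + b ^ 2) := sqrt_pos.2 (by positivity)
  rw [cos_add, cos_arctan, sin_arctan, hsqrt]
  field_simp

lemma neg_lt_arctan_mul_tan {c t : ℝ} (hc : -1 < c) (ht0 : 0 < t) (ht : t < π / 2) :
    -t < arctan (c * tan t) := by
  have htan : 0 < tan t := tan_pos_of_pos_of_lt_pi_div_two ht0 ht
  calc -t = arctan (tan (-t)) := (arctan_tan (by linarith) (by linarith)).symm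
    _ < arctan (c * tan t) := by
      rw [tan_neg]
      exact arctan_strictMono (by nlinarith)

lemma arccos_eq_half_add_arctan {k θ : ℝ} (hk : 0 < k) (h0 : 0 < θ) (hπ : θ < π) :
    arccos ((1 + k * cos θ) / √(1 + k ^ 2 + 2 * k * cos θ)) =
      θ / 2 + arctan ((k - 1) / (k + 1) * tan (θ / 2)) := by
  set t := θ / 2 with ht_def
  have ht0 : 0 < t := by positivity
  have ht : t < π / 2 := by linarith
  have hcos : 0 < cos t := cos_pos_of_mem_Ioo ⟨by linarith, ht⟩
  have hθ : θ = 2 * t := by ring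
  have hx : (k - 1) / (k + 1) * tan t = (k - 1) * sin t / ((k + 1) * cos t) := by
    rw [tan_eq_sin_div_cos]; field_simp
  have hlow := neg_lt_arctan_mul_tan (c := (k - 1) / (k + 1))
    (by rw [lt_div_iff₀ (by linarith)]; linarith) ht0 ht
  have hup := arctan_lt_pi_div_two ((k - 1) / (k + 1) * tan t)
  refine arccos_eq_of_eq_cos (by linarith) (by linarith) ?_
  rw [hx, cos_add_arctan_div (by positivity), hθ, cos_two_mul]
  congr 1
  · nlinarith [sin_sq_add_cos_sq t]
  · congr 1; nlinarith [sin_sq_add_cos_sq t]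

lemma tan_mul_lt_mul_tan {c t : ℝ} (hc0 : 0 < c) (hc1 : c < 1) (ht0 : 0 < t)
    (ht : t < π / 2) :
    tan (c * t) < c * tan t := by
  have hmem : ∀ s ∈ Icc 0 t, c * s ∈ Icc 0 t := fun s hs =>
    ⟨by nlinarith [hs.1], by nlinarith [hs.1, hs.2]⟩
  have hcos : ∀ s ∈ Icc 0 t, 0 < cos s := fun s hs =>
    cos_pos_of_mem_Ioo ⟨by linarith [hs.1, pi_pos], by linarith [hs.2]⟩
  have hderiv : ∀ s ∈ Icc 0 t, HasDerivAt (fun s => c * tan s - tan (c * s))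
      (c * (1 / cos s ^ 2) - 1 / cos (c * s) ^ 2 * c) s := fun s hs =>
    ((hasDerivAt_tan (hcos s hs).ne').const_mul c).sub
      ((hasDerivAt_tan (hcos _ (hmem s hs)).ne').comp s (hasDerivAt_const_mul c))
  have hmono : StrictMonoOn (fun s => c * tan s - tan (c * s)) (Icc 0 t) := by
    refine strictMonoOn_of_deriv_pos (convex_Icc 0 t)
      (fun s hs => (hderiv s hs).continuousAt.continuousWithinAt) fun s hs => ?_
    rw [interior_Icc] at hs
    have hs' := Ioo_subset_Icc_self hs
    have hlt : cos s < cos (c * s) := cos_lt_cos_of_nonneg_of_le_pi_div_two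
      (by nlinarith [hs.1]) (by linarith [hs.2]) (by nlinarith [hs.1])
    have hcos_s := hcos s hs'
    rw [(hderiv s hs').deriv, sub_pos, mul_comm]
    gcongr
  simpa using hmono (left_mem_Icc.2 ht0.le) (right_mem_Icc.2 ht0.le) ht0

lemma mul_lt_arctan_mul_tan {c t : ℝ} (hc0 : 0 < c) (hc1 : c < 1) (ht0 : 0 < t)
    (ht : t < π / 2) :
    c * t < arctan (c * tan t) := by
  rw [← arctan_tan (x := c * t) (by nlinarith [pi_pos]) (by nlinarith)]
  exact arctan_strictMono (tan_mul_lt_mul_tan hc0 hc1 ht0 ht)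

lemma arctan_mul_tan_lt_mul {c t : ℝ} (hc0 : -1 < c) (hc1 : c < 0) (ht0 : 0 < t)
    (ht : t < π / 2) :
    arctan (c * tan t) < c * t := by
  have := mul_lt_arctan_mul_tan (c := -c) (by linarith) (by linarith) ht0 ht
  rw [neg_mul, neg_mul, arctan_neg] at this
  linarith

lemma DthetaPlus_neg (k θ : ℝ) : DthetaPlus k (-θ) = -DthetaPlus k θ := by
  simp only [DthetaPlus, cos_neg, Real.sign_neg]
  ring

lemma DthetaPlus_eq_arctan_sub {k θ : ℝ} (hk : 0 < k) (h0 : 0 < θ) (hπ : θ < π) :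
    DthetaPlus k θ =
      arctan ((k - 1) / (k + 1) * tan (θ / 2)) - (k - 1) / (k + 1) * (θ / 2) := by
  rw [DthetaPlus, Real.sign_of_pos h0, one_mul, arccos_eq_half_add_arctan hk h0 hπ]
  field_simp
  ring

lemma DthetaPlus_pi (k : ℝ) :
    DthetaPlus k π = arccos ((1 - k) / |1 - k|) - k / (1 + k) * π := by
  rw [DthetaPlus, Real.sign_of_pos pi_pos, one_mul, cos_pi,
    show 1 + k ^ 2 + 2 * k * -1 = (1 - k) ^ 2 by ring, sqrt_sq_eq_abs]
  ring_nf

lemma DthetaPlus_pos_of_one_lt {k θ : ℝ} (hk : 1 < k) (h0 : 0 < θ) (hπ : θ ≤ π) :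
    0 < DthetaPlus k θ := by
  rcases hπ.lt_or_eq with hπ | rfl
  · rw [DthetaPlus_eq_arctan_sub (by linarith) h0 hπ, sub_pos]
    exact mul_lt_arctan_mul_tan (div_pos (by linarith) (by linarith))
      ((div_lt_one (by linarith)).2 (by linarith)) (by linarith) (by linarith)
  · rw [DthetaPlus_pi, abs_of_neg (by linarith), div_neg_self (by linarith), arccos_neg_one,
      sub_pos, div_mul_eq_mul_div, div_lt_iff₀ (by linarith)]
    nlinarith [pi_pos]

lemma DthetaPlus_neg_of_lt_one {k θ : ℝ} (hk0 : 0 < k) (hk : k < 1) (h0 : 0 < θ)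
    (hπ : θ ≤ π) :
    DthetaPlus k θ < 0 := by
  rcases hπ.lt_or_eq with hπ | rfl
  · rw [DthetaPlus_eq_arctan_sub hk0 h0 hπ, sub_neg]
    exact arctan_mul_tan_lt_mul ((lt_div_iff₀ (by linarith)).2 (by linarith))
      (div_neg_of_neg_of_pos (by linarith) (by linarith)) (by linarith) (by linarith)
  · rw [DthetaPlus_pi, abs_of_pos (by linarith), div_self (by linarith), arccos_one, zero_sub,
      neg_neg_iff_pos]
    positivity

theorem stmt6_general (k Dtheta : ℝ) (hk : 0 < k)
    (hd1 : -Real.pi ≤ Dtheta) (hd2 : Dtheta ≤ Real.pi) :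
    ((1 < k ∧ 0 < Dtheta) → 0 < DthetaPlus k Dtheta) ∧
    ((k < 1 ∧ 0 < Dtheta) → DthetaPlus k Dtheta < 0) ∧
    ((1 < k ∧ Dtheta < 0) → DthetaPlus k Dtheta < 0) ∧
    ((k < 1 ∧ Dtheta < 0) → 0 < DthetaPlus k Dtheta) := by
  have hd1' : -Dtheta ≤ π := by linarith
  have hodd : DthetaPlus k Dtheta = -DthetaPlus k (-Dtheta) := by
    rw [DthetaPlus_neg, neg_neg]
  refine ⟨fun ⟨hk1, h0⟩ => DthetaPlus_pos_of_one_lt hk1 h0 hd2,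
    fun ⟨hk1, h0⟩ => DthetaPlus_neg_of_lt_one hk hk1 h0 hd2,
    fun ⟨hk1, h0⟩ => ?_, fun ⟨hk1, h0⟩ => ?_⟩
  · rw [hodd, neg_lt_zero]
    exact DthetaPlus_pos_of_one_lt hk1 (neg_pos.2 h0) hd1'
  · rw [hodd, neg_pos]
    exact DthetaPlus_neg_of_lt_one hk hk1 (neg_pos.2 h0) hd1'

/-- Proposition 9 (sign properties of `DthetaPlus`). -/
theorem stmt6 (k Dtheta : ℝ) (hk : 0 < k)
    (hd1 : -Real.pi ≤ Dtheta) (hd2 : Dtheta ≤ Real.pi)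
    (hpos : 0 < 1 + k ^ 2 + 2 * k * Real.cos Dtheta) :
    ((1 < k ∧ 0 < Dtheta) → 0 < DthetaPlus k Dtheta) ∧
    ((k < 1 ∧ 0 < Dtheta) → DthetaPlus k Dtheta < 0) ∧
    ((1 < k ∧ Dtheta < 0) → DthetaPlus k Dtheta < 0) ∧
    ((k < 1 ∧ Dtheta < 0) → 0 < DthetaPlus k Dtheta) :=
  stmt6_general k Dtheta hk hd1 hd2
end
end

section
/- Define, for k > 0 and Dtheta in (-pi, pi) with 1 + k^2 + 2k*cos(Dtheta) > 0, the function Dtheta_plus(k, Dtheta) = sign(Dtheta) * arccos( (1 + k*cos(Dtheta)) / sqrt(1 + k^2 + 2k*cos(Dtheta)) ) - (k/(1+k)) * Dtheta. Then for every fixed Dtheta in (-pi, pi): (i) Dtheta_plus(1, Dtheta) = 0; (ii) the limit of Dtheta_plus(k, Dtheta) as k tends to 0+ is 0; (iii) the limit of Dtheta_plus(k, Dtheta) as k tends to +infinity is 0. (Proposition 9, degenerate cases.) -/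
/-!
The arccos term is the argument of `1 + k e^{iθ}` (up to the sign of `θ`), so it only depends
on the ratio of the two coefficients. At `k = 1` the vector `1 + e^{iθ}` bisects the angle,
giving `θ / 2`; as `k → 0` the argument tends to that of `1`, namely `0`, and, after swapping
the coefficients via `k ↦ k⁻¹`, as `k → ∞` it tends to that of `e^{iθ}`, namely `θ`. These
match the Gaussian filter's values `θ / 2`, `0` and `θ`.
-/

open Filter

noncomputable section

open Real

lemma Real.sign_mul_abs (x : ℝ) : sign x * |x| = x := by
  rcases lt_trichotomy x 0 with h | rfl | h
  · rw [sign_of_neg h, abs_of_neg h]; ring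
  · simp
  · rw [sign_of_pos h, abs_of_pos h, one_mul]

lemma Real.arccos_cos_eq_abs {θ : ℝ} (hθ : |θ| ≤ π) : arccos (cos θ) = |θ| := by
  rw [← cos_abs, arccos_cos (abs_nonneg θ) hθ]

lemma Real.sign_mul_arccos_cos {θ : ℝ} (hθ : |θ| ≤ π) : sign θ * arccos (cos θ) = θ := by
  rw [arccos_cos_eq_abs hθ, sign_mul_abs]

/-- The cosine of the argument of `a + b e^{iθ}`. -/
def angleCos (a b θ : ℝ) : ℝ := (a + b * cos θ) / √(a ^ 2 + b ^ 2 + 2 * a * b * cos θ)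

lemma dthetaPlus_eq_angleCos (k θ : ℝ) :
    DthetaPlus k θ = sign θ * arccos (angleCos 1 k θ) - k / (1 + k) * θ := by
  simp only [DthetaPlus, angleCos, one_pow, mul_one]

lemma angleCos_mul_mul {t : ℝ} (ht : 0 < t) (a b θ : ℝ) :
    angleCos (t * a) (t * b) θ = angleCos a b θ := by
  have hsq : (t * a) ^ 2 + (t * b) ^ 2 + 2 * (t * a) * (t * b) * cos θ
      = t ^ 2 * (a ^ 2 + b ^ 2 + 2 * a * b * cos θ) := by ring
  rw [angleCos, angleCos, hsq, sqrt_mul (sq_nonneg t), sqrt_sq ht.le, mul_assoc, ← mul_add,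
    mul_div_mul_left _ _ ht.ne']

lemma angleCos_zero_left {b : ℝ} (hb : 0 < b) (θ : ℝ) : angleCos 0 b θ = cos θ := by
  simp [angleCos, sqrt_sq hb.le, hb.ne']

lemma angleCos_one_one {θ : ℝ} (hθ : |θ| ≤ π) : angleCos 1 1 θ = cos (θ / 2) := by
  set h := cos (θ / 2)
  have hcos : cos θ = 2 * h ^ 2 - 1 := by rw [← cos_two_mul]; ring_nf
  have hh : 0 ≤ h := by
    obtain ⟨h₁, h₂⟩ := abs_le.mp hθ
    exact cos_nonneg_of_neg_pi_div_two_le_of_le (by linarith) (by linarith)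
  have hsq : (1 : ℝ) ^ 2 + 1 ^ 2 + 2 * 1 * 1 * cos θ = (2 * h) ^ 2 := by rw [hcos]; ring
  rw [angleCos, hsq, sqrt_sq (by positivity), hcos]
  rcases hh.eq_or_lt with h0 | h0
  · simp [← h0]
  · field_simp; ring

lemma ContinuousAt.angleCos {α : Type*} [TopologicalSpace α] {f g : α → ℝ} {x : α}
    (hf : ContinuousAt f x) (hg : ContinuousAt g x) (θ : ℝ)
    (h : 0 < f x ^ 2 + g x ^ 2 + 2 * f x * g x * cos θ) :
    ContinuousAt (fun y => _root_.angleCos (f y) (g y) θ) x :=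
  (hf.add (hg.mul continuousAt_const)).div (by fun_prop) (sqrt_pos.mpr h).ne'

lemma dthetaPlus_one {θ : ℝ} (hθ : |θ| ≤ π) : DthetaPlus 1 θ = 0 := by
  have hθ2 : |θ / 2| ≤ π := by rw [abs_div, abs_two]; linarith [abs_nonneg θ]
  rw [dthetaPlus_eq_angleCos, angleCos_one_one hθ, arccos_cos_eq_abs hθ2, abs_div, abs_two,
    mul_div_assoc', sign_mul_abs]
  ring

lemma tendsto_dthetaPlus_zero (θ : ℝ) :
    Tendsto (fun k => DthetaPlus k θ) (nhds 0) (nhds 0) := by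
  have hcont : ContinuousAt (fun k => DthetaPlus k θ) 0 := by
    simp only [dthetaPlus_eq_angleCos]
    refine (continuousAt_const.mul (continuous_arccos.continuousAt.comp ?_)).sub
      ((continuousAt_id.div (by fun_prop) (by norm_num)).mul continuousAt_const)
    exact continuousAt_const.angleCos continuousAt_id θ (by norm_num)
  simpa [DthetaPlus] using hcont.tendsto

lemma dthetaPlus_eq_inv {k : ℝ} (hk : 0 < k) (θ : ℝ) :
    DthetaPlus k θ = sign θ * arccos (angleCos k⁻¹ 1 θ) - 1 / (k⁻¹ + 1) * θ := by
  have hswap : angleCos 1 k θ = angleCos k⁻¹ 1 θ := by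
    rw [← angleCos_mul_mul hk k⁻¹ 1, mul_inv_cancel₀ hk.ne', mul_one]
  rw [dthetaPlus_eq_angleCos, hswap]
  field_simp

lemma tendsto_dthetaPlus_atTop {θ : ℝ} (hθ : |θ| ≤ π) :
    Tendsto (fun k => DthetaPlus k θ) atTop (nhds 0) := by
  set H : ℝ → ℝ := fun u => sign θ * arccos (angleCos u 1 θ) - 1 / (u + 1) * θ
  have hcont : ContinuousAt H 0 := by
    refine (continuousAt_const.mul (continuous_arccos.continuousAt.comp ?_)).sub
      ((continuousAt_const.div (by fun_prop) (by norm_num)).mul continuousAt_const)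
    exact continuousAt_id.angleCos continuousAt_const θ (by norm_num)
  have hH0 : H 0 = 0 := by
    simp only [H, angleCos_zero_left one_pos, sign_mul_arccos_cos hθ]
    ring
  have hlim := hcont.tendsto.comp tendsto_inv_atTop_zero
  rw [hH0] at hlim
  refine hlim.congr' ?_
  filter_upwards [eventually_gt_atTop 0] with k hk
  exact (dthetaPlus_eq_inv hk θ).symm

/-- Proposition 9 (degenerate cases): for fixed `Dθ ∈ (-π, π)`,
`DthetaPlus 1 Dθ = 0`, `DthetaPlus k Dθ → 0` as `k → 0⁺`, and
`DthetaPlus k Dθ → 0` as `k → +∞`. -/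
theorem stmt7 (Dtheta : ℝ) (hd1 : -Real.pi < Dtheta) (hd2 : Dtheta < Real.pi) :
    DthetaPlus 1 Dtheta = 0 ∧
    Tendsto (fun k : ℝ => DthetaPlus k Dtheta) (nhdsWithin 0 (Set.Ioi 0)) (nhds 0) ∧
    Tendsto (fun k : ℝ => DthetaPlus k Dtheta) atTop (nhds 0) := by
  have hθ : |Dtheta| ≤ Real.pi := abs_le.mpr ⟨hd1.le, hd2.le⟩
  exact ⟨dthetaPlus_one hθ, (tendsto_dthetaPlus_zero Dtheta).mono_left nhdsWithin_le_nhds,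
    tendsto_dthetaPlus_atTop hθ⟩
end
end

section
/- Let n be a natural number, Rhat in SO(3), E and deltaB real 3xn matrices with columns e^i and deltab^i, W = diag(w^1, ..., w^n) a real diagonal nxn matrix, and Ltilde any real 3x3 matrix. Then for xi in R^3, the equation hat(xi) * Ltilde * Rhat^T + Rhat * Ltilde^T * hat(xi) = Rhat * deltaB * W * E^T - E * W * deltaB^T * Rhat^T holds if and only if ( trace(Ltilde * Rhat^T) * I_3 - Ltilde * Rhat^T ) * xi = sum over i of w^i * hat(e^i) * Rhat * deltab^i. (Theorem 5: first-order relation between the attitude error of the Wahba-optimal attitude and the vector measurement errors, right-invariant error case.) -/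
/-!
With `A = L̃ R̂ᵀ`, the left-hand side is `ξ^ A + Aᵀ ξ^ = (((tr A) I - A) ξ)^`. The right-hand side is
`X - Xᵀ` for `X = ∑ᵢ wⁱ (R̂ δbⁱ)(eⁱ)ᵀ`, and `b aᵀ - a bᵀ = (a^ b)^` makes it `(∑ᵢ wⁱ (eⁱ)^ R̂ δbⁱ)^`.
The hat map is injective, so the two equations are equivalent.
-/

open Matrix

noncomputable section

theorem mul_diagonal_mul_transpose_eq_sum {m n α : Type*} [Fintype n] [DecidableEq n]
    [CommSemiring α] (A B : Matrix m n α) (w : n → α) :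
    A * diagonal w * Bᵀ = ∑ k, w k • vecMulVec (fun i => A i k) (fun j => B j k) := by
  ext i j
  simp only [mul_apply, diagonal_apply, mul_ite, mul_zero, Finset.sum_ite_eq', Finset.mem_univ,
    if_true, transpose_apply, Matrix.sum_apply, Matrix.smul_apply, vecMulVec_apply, smul_eq_mul]
  exact Finset.sum_congr rfl fun k _ => by ring

theorem mul_col_eq_mulVec {l m n α : Type*} [Fintype m] [NonUnitalNonAssocSemiring α]
    (A : Matrix l m α) (B : Matrix m n α) (k : n) :
    (fun i => (A * B) i k) = A *ᵥ fun j => B j k := rfl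

theorem hat_injective : Function.Injective hat := by
  intro a b h
  funext k
  fin_cases k
  · simpa [hat] using congrFun (congrFun h 2) 1
  · simpa [hat] using congrFun (congrFun h 0) 2
  · simpa [hat] using congrFun (congrFun h 1) 0

theorem hat_smul (c : ℝ) (a : Fin 3 → ℝ) : hat (c • a) = c • hat a := by
  ext i j
  fin_cases i <;> fin_cases j <;> simp [hat]

theorem hat_sum {ι : Type*} (s : Finset ι) (f : ι → Fin 3 → ℝ) :
    hat (∑ i ∈ s, f i) = ∑ i ∈ s, hat (f i) := by
  ext i j
  fin_cases i <;> fin_cases j <;> simp [hat, Matrix.sum_apply, Finset.sum_neg_distrib]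

theorem hat_mul_add_transpose_mul_hat (A : Matrix (Fin 3) (Fin 3) ℝ) (a : Fin 3 → ℝ) :
    hat a * A + Aᵀ * hat a = hat ((A.trace • 1 - A) *ᵥ a) := by
  ext i j
  fin_cases i <;> fin_cases j <;>
    simp [hat, mul_apply, mulVec, vecMul, dotProduct, trace, Fin.sum_univ_three, one_apply] <;> ring

theorem vecMulVec_sub_vecMulVec (a b : Fin 3 → ℝ) :
    vecMulVec b a - vecMulVec a b = hat (hat a *ᵥ b) := by
  ext i j
  fin_cases i <;> fin_cases j <;>
    simp [hat, vecMulVec_apply, mulVec, dotProduct, Fin.sum_univ_three] <;> ring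

theorem skew_part_eq_hat_sum {n : ℕ} (R : Matrix (Fin 3) (Fin 3) ℝ)
    (E B : Matrix (Fin 3) (Fin n) ℝ) (w : Fin n → ℝ) :
    R * B * diagonal w * Eᵀ - E * diagonal w * Bᵀ * Rᵀ =
      hat (∑ k, w k • hat (fun i => E i k) *ᵥ (R *ᵥ fun j => B j k)) := by
  have hT : E * diagonal w * Bᵀ * Rᵀ = E * diagonal w * (R * B)ᵀ := by
    rw [transpose_mul, Matrix.mul_assoc]
  rw [hT, mul_diagonal_mul_transpose_eq_sum, mul_diagonal_mul_transpose_eq_sum,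
    ← Finset.sum_sub_distrib, hat_sum]
  refine Finset.sum_congr rfl fun k _ => ?_
  rw [← smul_sub, mul_col_eq_mulVec, vecMulVec_sub_vecMulVec, hat_smul]

theorem stmt9_general (n : ℕ) (Rhat : Matrix (Fin 3) (Fin 3) ℝ)
    (E deltaB : Matrix (Fin 3) (Fin n) ℝ) (w : Fin n → ℝ)
    (W : Matrix (Fin n) (Fin n) ℝ) (hW : W = Matrix.diagonal w)
    (Ltilde : Matrix (Fin 3) (Fin 3) ℝ) (xi : Fin 3 → ℝ) :
    (hat xi * Ltilde * Rhatᵀ + Rhat * Ltildeᵀ * hat xi =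
        Rhat * deltaB * W * Eᵀ - E * W * deltaBᵀ * Rhatᵀ) ↔
      (Matrix.trace (Ltilde * Rhatᵀ) • (1 : Matrix (Fin 3) (Fin 3) ℝ) -
          Ltilde * Rhatᵀ).mulVec xi =
        ∑ i : Fin n, w i •
          (hat fun l => E l i).mulVec (Rhat.mulVec fun l => deltaB l i) := by
  have hL : hat xi * Ltilde * Rhatᵀ + Rhat * Ltildeᵀ * hat xi =
      hat xi * (Ltilde * Rhatᵀ) + (Ltilde * Rhatᵀ)ᵀ * hat xi := by
    rw [transpose_mul, transpose_transpose, Matrix.mul_assoc]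
  rw [hL, hat_mul_add_transpose_mul_hat, hW, skew_part_eq_hat_sum]
  exact hat_injective.eq_iff

/-- Theorem 5 (right-invariant error case): the linearized optimality condition
`ξ^ L̃ R̂ᵀ + R̂ L̃ᵀ ξ^ = R̂ δB W Eᵀ - E W δBᵀ R̂ᵀ` holds iff
`(tr(L̃ R̂ᵀ) I₃ - L̃ R̂ᵀ) ξ = ∑ᵢ wⁱ (eⁱ)^ R̂ δbⁱ`. -/
theorem stmt9 (n : ℕ) (Rhat : Matrix (Fin 3) (Fin 3) ℝ) (hR : SO3 Rhat)
    (E deltaB : Matrix (Fin 3) (Fin n) ℝ) (w : Fin n → ℝ)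
    (W : Matrix (Fin n) (Fin n) ℝ) (hW : W = Matrix.diagonal w)
    (Ltilde : Matrix (Fin 3) (Fin 3) ℝ) (xi : Fin 3 → ℝ) :
    (hat xi * Ltilde * Rhatᵀ + Rhat * Ltildeᵀ * hat xi =
        Rhat * deltaB * W * Eᵀ - E * W * deltaBᵀ * Rhatᵀ) ↔
      (Matrix.trace (Ltilde * Rhatᵀ) • (1 : Matrix (Fin 3) (Fin 3) ℝ) -
          Ltilde * Rhatᵀ).mulVec xi =
        ∑ i : Fin n, w i •
          (hat fun l => E l i).mulVec (Rhat.mulVec fun l => deltaB l i) :=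
  stmt9_general n Rhat E deltaB w W hW Ltilde xi
end
end

section
/- Let U, V be in SO(3) and S = diag(s1, s2, s3) with s1 >= s2 >= |s3| and s2 + s3 > 0. Set Ltilde = U S V^T, Rhat = U V^T, and A = trace(Ltilde * Rhat^T) * I_3 - Ltilde * Rhat^T. Then det(A) = (s2 + s3)(s1 + s3)(s1 + s2) > 0; in particular A is invertible. (Proposition 6.) -/
/-!
Since `V` is orthogonal, `L̃ R̂ᵀ = U S Uᵀ`, so `A = U (tr S • 1 - S) Uᵀ` is orthogonally
similar to the diagonal matrix with entries `tr S - sᵢ`, i.e. `s₂ + s₃`, `s₁ + s₃`, `s₁ + s₂`;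
the ordering of the singular values makes all three positive.
-/

open Matrix

noncomputable section

namespace Matrix

variable {n R : Type*} [DecidableEq n] [CommRing R]

theorem smul_one_sub_diagonal (c : R) (s : n → R) :
    c • (1 : Matrix n n R) - diagonal s = diagonal fun i ↦ c - s i := by
  rw [← diagonal_one, ← diagonal_smul, diagonal_sub]
  simp only [Pi.smul_apply, smul_eq_mul, mul_one]

variable [Fintype n]

theorem mul_mul_transpose_mul_transpose_of_transpose_mul_self {V : Matrix n n R}
    (hV : Vᵀ * V = 1) (U D : Matrix n n R) :
    U * D * Vᵀ * (U * Vᵀ)ᵀ = U * D * Uᵀ := by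
  rw [transpose_mul, transpose_transpose, Matrix.mul_assoc, ← Matrix.mul_assoc Vᵀ,
    hV, Matrix.one_mul]

theorem trace_mul_mul_transpose_of_transpose_mul_self {U : Matrix n n R}
    (hU : Uᵀ * U = 1) (M : Matrix n n R) : trace (U * M * Uᵀ) = trace M := by
  rw [trace_mul_cycle, hU, Matrix.one_mul]

theorem det_mul_mul_transpose_of_transpose_mul_self {U : Matrix n n R}
    (hU : Uᵀ * U = 1) (M : Matrix n n R) : det (U * M * Uᵀ) = det M := by
  have hdetU : det U * det U = 1 := by
    simpa only [det_mul, det_transpose, det_one] using congrArg det hU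
  rw [det_mul, det_mul, det_transpose]
  linear_combination det M * hdetU

theorem smul_one_sub_mul_mul_transpose_of_transpose_mul_self {U : Matrix n n R}
    (hU : Uᵀ * U = 1) (c : R) (M : Matrix n n R) :
    c • (1 : Matrix n n R) - U * M * Uᵀ = U * (c • 1 - M) * Uᵀ := by
  rw [Matrix.mul_sub, Matrix.sub_mul, Matrix.mul_smul, Matrix.smul_mul, Matrix.mul_one,
    mul_eq_one_comm.mp hU]

theorem det_trace_smul_one_sub_mul_diagonal_mul_transpose {U : Matrix n n R}
    (hU : Uᵀ * U = 1) (s : n → R) :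
    det (trace (U * diagonal s * Uᵀ) • 1 - U * diagonal s * Uᵀ) = ∏ i, (∑ j, s j - s i) := by
  rw [trace_mul_mul_transpose_of_transpose_mul_self hU, trace_diagonal,
    smul_one_sub_mul_mul_transpose_of_transpose_mul_self hU,
    det_mul_mul_transpose_of_transpose_mul_self hU, smul_one_sub_diagonal, det_diagonal]

end Matrix

/-- Proposition 6: with `L̃ = U S Vᵀ`, `R̂ = U Vᵀ` (proper SVD, `s1 ≥ s2 ≥ |s3|`,
`s2 + s3 > 0`) and `A = tr(L̃ R̂ᵀ) I₃ - L̃ R̂ᵀ`, one has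
`det A = (s2+s3)(s1+s3)(s1+s2) > 0`; in particular `A` is invertible. -/
theorem stmt10 (U V : Matrix (Fin 3) (Fin 3) ℝ) (hU : SO3 U) (hV : SO3 V)
    (s : Fin 3 → ℝ) (h12 : s 1 ≤ s 0) (h23 : |s 2| ≤ s 1) (hpos : 0 < s 1 + s 2)
    (Ltilde Rhat A : Matrix (Fin 3) (Fin 3) ℝ)
    (hL : Ltilde = U * Matrix.diagonal s * Vᵀ) (hR : Rhat = U * Vᵀ)
    (hA : A = Matrix.trace (Ltilde * Rhatᵀ) • (1 : Matrix (Fin 3) (Fin 3) ℝ) -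
      Ltilde * Rhatᵀ) :
    A.det = (s 1 + s 2) * (s 0 + s 2) * (s 0 + s 1) ∧ 0 < A.det ∧ IsUnit A := by
  have hM : Ltilde * Rhatᵀ = U * diagonal s * Uᵀ := by
    rw [hL, hR, mul_mul_transpose_mul_transpose_of_transpose_mul_self hV.1]
  have hdet : A.det = (s 1 + s 2) * (s 0 + s 2) * (s 0 + s 1) := by
    rw [hA, hM, det_trace_smul_one_sub_mul_diagonal_mul_transpose hU.1, Fin.prod_univ_three,
      Fin.sum_univ_three]
    ring
  have hdet_pos : 0 < A.det := by
    have h02 : 0 < s 0 + s 2 := by linarith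
    have h01 : 0 < s 0 + s 1 := by linarith [(abs_le.mp h23).2]
    rw [hdet]
    positivity
  exact ⟨hdet, hdet_pos, (isUnit_iff_isUnit_det A).mpr hdet_pos.ne'.isUnit⟩
end
end

section
/- Let U, V be in SO(3) and S = diag(s1, s2, s3) with s1 >= s2 >= |s3| and s2 + s3 > 0. Set Ltilde = U S V^T, Rhat = U V^T, and B = trace(Rhat^T * Ltilde) * I_3 - Rhat^T * Ltilde. Then det(B) = (s2 + s3)(s1 + s3)(s1 + s2) > 0; in particular B is invertible. (Proposition 7.) -/
/-!
As `Uᵀ U = I`, `R̂ᵀ L̃ = V S Vᵀ`, so `B = V (tr S • I - S) Vᵀ` is orthogonally similar to the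
diagonal matrix with entries `tr S - sᵢ`, i.e. `s₂ + s₃`, `s₁ + s₃`, `s₁ + s₂`, all positive.
-/

open Matrix

noncomputable section

namespace Matrix

variable {n R : Type*} [Fintype n] [DecidableEq n] [CommRing R]

theorem transpose_mul_mul_mul_transpose_of_transpose_mul_self {U : Matrix n n R}
    (hU : Uᵀ * U = 1) (V D : Matrix n n R) :
    (U * Vᵀ)ᵀ * (U * D * Vᵀ) = V * D * Vᵀ := by
  rw [transpose_mul, transpose_transpose]
  calc V * Uᵀ * (U * D * Vᵀ) = V * (Uᵀ * U) * D * Vᵀ := by simp only [mul_assoc]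
    _ = V * D * Vᵀ := by rw [hU, mul_one]

theorem det_mul_mul_transpose_of_transpose_mul_self_s12 {V : Matrix n n R}
    (hV : Vᵀ * V = 1) (A : Matrix n n R) : (V * A * Vᵀ).det = A.det := by
  have hdet : V.det * V.det = 1 := by
    simpa only [det_mul, det_transpose, det_one] using congrArg det hV
  rw [det_mul, det_mul, det_transpose, mul_right_comm, hdet, one_mul]

theorem trace_smul_one_sub_mul_mul_transpose {V : Matrix n n R} (hV : Vᵀ * V = 1)
    (A : Matrix n n R) :
    trace (V * A * Vᵀ) • (1 : Matrix n n R) - V * A * Vᵀ =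
      V * (trace A • (1 : Matrix n n R) - A) * Vᵀ := by
  have hVV : V * Vᵀ = 1 := mul_eq_one_comm.mp hV
  rw [trace_mul_cycle, hV, one_mul, Matrix.mul_sub, Matrix.sub_mul, Matrix.mul_smul,
    mul_one, Matrix.smul_mul, hVV]

theorem det_trace_smul_one_sub_diagonal (s : n → R) :
    (trace (diagonal s) • (1 : Matrix n n R) - diagonal s).det = ∏ i, (∑ j, s j - s i) := by
  rw [trace_diagonal, smul_one_eq_diagonal, diagonal_sub, det_diagonal]

end Matrix

/-- Proposition 7: with `L̃ = U S Vᵀ`, `R̂ = U Vᵀ` (proper SVD, `s1 ≥ s2 ≥ |s3|`,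
`s2 + s3 > 0`) and `B = tr(R̂ᵀ L̃) I₃ - R̂ᵀ L̃`, one has
`det B = (s2+s3)(s1+s3)(s1+s2) > 0`; in particular `B` is invertible. -/
theorem stmt12 (U V : Matrix (Fin 3) (Fin 3) ℝ) (hU : SO3 U) (hV : SO3 V)
    (s : Fin 3 → ℝ) (h12 : s 1 ≤ s 0) (h23 : |s 2| ≤ s 1) (hpos : 0 < s 1 + s 2)
    (Ltilde Rhat B : Matrix (Fin 3) (Fin 3) ℝ)
    (hL : Ltilde = U * Matrix.diagonal s * Vᵀ) (hR : Rhat = U * Vᵀ)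
    (hB : B = Matrix.trace (Rhatᵀ * Ltilde) • (1 : Matrix (Fin 3) (Fin 3) ℝ) -
      Rhatᵀ * Ltilde) :
    B.det = (s 1 + s 2) * (s 0 + s 2) * (s 0 + s 1) ∧ 0 < B.det ∧ IsUnit B := by
  have hM : Rhatᵀ * Ltilde = V * diagonal s * Vᵀ := by
    rw [hR, hL]
    exact transpose_mul_mul_mul_transpose_of_transpose_mul_self hU.1 V (diagonal s)
  have hdet : B.det = (s 1 + s 2) * (s 0 + s 2) * (s 0 + s 1) := by
    rw [hB, hM, trace_smul_one_sub_mul_mul_transpose hV.1,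
      det_mul_mul_transpose_of_transpose_mul_self_s12 hV.1, det_trace_smul_one_sub_diagonal,
      Fin.prod_univ_three, Fin.sum_univ_three]
    ring
  have hpos_det : 0 < B.det := by
    have h02 : 0 < s 0 + s 2 := by linarith
    have h01 : 0 < s 0 + s 1 := by linarith [le_abs_self (s 2)]
    rw [hdet]
    positivity
  exact ⟨hdet, hpos_det, (isUnit_iff_isUnit_det B).mpr (isUnit_iff_ne_zero.mpr hpos_det.ne')⟩
end
end

section
/- Let k > 0 and Dtheta in (-pi, pi) be real numbers with 1 + k^2 + 2k*cos(Dtheta) > 0, and define Dthetahat = sign(Dtheta) * arccos( (1 + k*cos(Dtheta)) / sqrt(1 + k^2 + 2k*cos(Dtheta)) ). Then cos( Dtheta - Dthetahat ) = ( cos(Dtheta) + k ) / sqrt( 1 + k^2 + 2k*cos(Dtheta) ). (Appendix B, key identity for the posterior estimation error of the single-axis filter.) -/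
/-! The correction angle is `arg z` for the resultant `z = 1 + k e^{iΔθ}` of the unit prior vector
and the measurement vector weighted by `k`: `arccos (re z / ‖z‖)` is its absolute value, and the
imaginary part `k sin Δθ` has the sign of `Δθ`. The identity is then the addition formula
`cos (Δθ - arg z) = (cos Δθ · re z + sin Δθ · im z) / ‖z‖`. -/

open Real

theorem Complex.arg_eq_sign_im_mul_arccos {z : ℂ} (h : 0 < z.re ∨ z.im ≠ 0) :
    Complex.arg z = Real.sign z.im * arccos (z.re / ‖z‖) := by
  rcases lt_trichotomy z.im 0 with him | him | him
  · rw [Complex.arg_of_im_neg him, Real.sign_of_neg him, neg_one_mul]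
  · have hre : 0 ≤ z.re := (h.resolve_right (not_not.mpr him)).le
    rw [him, Real.sign_zero, zero_mul, Complex.arg_eq_zero_iff]
    exact ⟨hre, him⟩
  · rw [Complex.arg_of_im_pos him, Real.sign_of_pos him, one_mul]

theorem Real.sign_mul_sin_of_pos {k θ : ℝ} (hk : 0 < k) (h₁ : -π < θ) (h₂ : θ < π) :
    Real.sign (k * sin θ) = Real.sign θ := by
  rcases lt_trichotomy θ 0 with hθ | rfl | hθ
  · rw [Real.sign_of_neg hθ,
      Real.sign_of_neg (mul_neg_of_pos_of_neg hk (sin_neg_of_neg_of_neg_pi_lt hθ h₁))]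
  · rw [sin_zero, mul_zero]
  · rw [Real.sign_of_pos hθ, Real.sign_of_pos (mul_pos hk (sin_pos_of_pos_of_lt_pi hθ h₂))]

theorem stmt16_general (k Dtheta : ℝ) (hk : 0 < k)
    (h1 : -Real.pi < Dtheta) (h2 : Dtheta < Real.pi)
    (Dthetahat : ℝ)
    (hDh : Dthetahat = Real.sign Dtheta *
      Real.arccos ((1 + k * Real.cos Dtheta) /
        Real.sqrt (1 + k ^ 2 + 2 * k * Real.cos Dtheta))) :
    Real.cos (Dtheta - Dthetahat) =
      (Real.cos Dtheta + k) / Real.sqrt (1 + k ^ 2 + 2 * k * Real.cos Dtheta) := by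
  set z : ℂ := ⟨1 + k * cos Dtheta, k * sin Dtheta⟩
  have hsign : Real.sign z.im = Real.sign Dtheta := Real.sign_mul_sin_of_pos hk h1 h2
  have hz : 0 < z.re ∨ z.im ≠ 0 := by
    rcases eq_or_ne Dtheta 0 with rfl | hθ
    · left
      simp only [z, cos_zero, mul_one]
      linarith
    · right
      rw [Ne, ← Real.sign_eq_zero_iff, hsign, Real.sign_eq_zero_iff]
      exact hθ
  have hz₀ : z ≠ 0 := fun h => by simp [h] at hz
  have hnorm : √(1 + k ^ 2 + 2 * k * cos Dtheta) = ‖z‖ := by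
    rw [Complex.norm_eq_sqrt_sq_add_sq]
    congr 1
    linear_combination (-k ^ 2) * sin_sq_add_cos_sq Dtheta
  have harg : Dthetahat = Complex.arg z := by
    rw [hDh, hnorm, Complex.arg_eq_sign_im_mul_arccos hz, hsign]
  rw [harg, hnorm, cos_sub, Complex.cos_arg hz₀, Complex.sin_arg]
  linear_combination (k / ‖z‖) * sin_sq_add_cos_sq Dtheta

/-- Appendix B key identity: for `k > 0`, `Δθ ∈ (-π, π)` with `1 + k² + 2k cos Δθ > 0` and
`Δθ̂ = sign(Δθ) arccos((1 + k cos Δθ)/sqrt(1 + k² + 2k cos Δθ))`, one has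
`cos(Δθ - Δθ̂) = (cos Δθ + k)/sqrt(1 + k² + 2k cos Δθ)`. -/
theorem stmt16 (k Dtheta : ℝ) (hk : 0 < k)
    (h1 : -Real.pi < Dtheta) (h2 : Dtheta < Real.pi)
    (hpos : 0 < 1 + k ^ 2 + 2 * k * Real.cos Dtheta)
    (Dthetahat : ℝ)
    (hDh : Dthetahat = Real.sign Dtheta *
      Real.arccos ((1 + k * Real.cos Dtheta) /
        Real.sqrt (1 + k ^ 2 + 2 * k * Real.cos Dtheta))) :
    Real.cos (Dtheta - Dthetahat) =
      (Real.cos Dtheta + k) / Real.sqrt (1 + k ^ 2 + 2 * k * Real.cos Dtheta) :=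
  stmt16_general k Dtheta hk h1 h2 Dthetahat hDh
end

section
/- Fix real constants 0 < alpha1 < alpha2, 0 < beta1 < beta2, epsilon in (0, 4), kappa0 > 0, and Delta0 in (-pi, pi] with 2*(1 - cos(Delta0)) <= 4 - epsilon. Let (sigma_k) and (kappa_k^m) be sequences of reals with alpha1 < sigma_k < alpha2 and beta1 < kappa_k^m < beta2 for all k >= 1. Define sequences (kappa_k) and (Delta_k) recursively by: kappabar_k = kappa_{k-1} / (1 + 2*kappa_{k-1}*sigma_k); kappa_k = sqrt( kappabar_k^2 + (kappa_k^m)^2 + 2*kappabar_k*kappa_k^m*cos(Delta_{k-1}) ); and Delta_k = Delta_{k-1} - sign(Delta_{k-1}) * arccos( (kappabar_k + kappa_k^m*cos(Delta_{k-1})) / kappa_k ). Then there exist a constant C > 0 and a constant f in (0, 1), both independent of k, such that for all k >= 0, 2*(1 - cos(Delta_k)) <= C * f^k * 2*(1 - cos(Delta_0)). (Theorem 10: almost-global exponential stability of the proposed right-invariant-error filter for single-axis rotation with noise-free measurements.) -/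
noncomputable section

set_option maxHeartbeats 2000000 in
lemma step_lemma (eps beta1 M kb km K D D' : ℝ)
    (he0 : 0 < eps) (he4 : eps < 4)
    (hkb : 0 < kb) (hb1 : 0 < beta1) (hb1km : beta1 ≤ km)
    (hM : kb + km ≤ M)
    (hD1 : -Real.pi < D) (hD2 : D < Real.pi)
    (hcd : eps / 2 ≤ 1 + Real.cos D)
    (hK : K = Real.sqrt (kb ^ 2 + km ^ 2 + 2 * kb * km * Real.cos D))
    (hD' : D' = D - Real.sign D *
        Real.arccos ((kb + km * Real.cos D) / K)) :
    0 < K ∧ -Real.pi < D' ∧ D' < Real.pi ∧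
      1 - Real.cos D' ≤ (1 - eps * beta1 / (4 * M)) * (1 - Real.cos D) := by
  have hkm : 0 < km := lt_of_lt_of_le hb1 hb1km
  have hpi := Real.pi_pos
  have hc1 : Real.cos D ≤ 1 := Real.cos_le_one D
  have hcm1 : -1 ≤ Real.cos D := Real.neg_one_le_cos D
  have hexpr : 0 < kb ^ 2 + km ^ 2 + 2 * kb * km * Real.cos D := by
    nlinarith [sq_nonneg (kb - km), mul_pos hkb hkm, mul_pos (mul_pos hkb hkm) he0]
  have hKpos : 0 < K := by rw [hK]; exact Real.sqrt_pos.mpr hexpr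
  have hK2 : K ^ 2 = kb ^ 2 + km ^ 2 + 2 * kb * km * Real.cos D := by
    rw [hK]; exact Real.sq_sqrt hexpr.le
  have hKnn : 0 ≤ K := hKpos.le
  have hsin2 : 0 ≤ km ^ 2 * (1 - Real.cos D ^ 2) := by
    have h9 : (0:ℝ) ≤ (1 - Real.cos D) * (1 + Real.cos D) := by nlinarith
    nlinarith [sq_nonneg km, mul_nonneg (sq_nonneg km) h9]
  have h1 : kb + km * Real.cos D ≤ K := by
    rcases le_or_gt (kb + km * Real.cos D) 0 with h | h
    · linarith
    · nlinarith [hK2, hsin2, hKnn]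
  have h2 : -(kb + km * Real.cos D) ≤ K := by
    rcases le_or_gt (-(kb + km * Real.cos D)) 0 with h | h
    · linarith
    · nlinarith [hK2, hsin2, hKnn]
  set c := (kb + km * Real.cos D) / K with hc
  clear_value c
  have hcle : c ≤ 1 := by rw [hc, div_le_one hKpos]; exact h1
  have hcge : -1 ≤ c := by rw [hc, le_div_iff₀ hKpos]; linarith
  have hcosA : Real.cos (Real.arccos c) = c := Real.cos_arccos hcge hcle
  have hA1 : 0 ≤ Real.arccos c := Real.arccos_nonneg c
  have hA2 : Real.arccos c ≤ Real.pi := Real.arccos_le_pi c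
  have hs2 : Real.sin D ^ 2 = 1 - Real.cos D ^ 2 := by
    linarith [Real.sin_sq_add_cos_sq D]
  have hsinA : Real.sin (Real.arccos c) = km * |Real.sin D| / K := by
    rw [Real.sin_arccos]
    have h5 : 1 - c ^ 2 = (km * Real.sin D / K) ^ 2 := by
      have hKne : K ≠ 0 := ne_of_gt hKpos
      rw [hc]
      field_simp
      linear_combination hK2 - km ^ 2 * Real.sin_sq_add_cos_sq D
    rw [h5, Real.sqrt_sq_eq_abs, abs_div, abs_mul, abs_of_pos hkm, abs_of_pos hKpos]
  have hcosD' : Real.cos D' = (kb * Real.cos D + km) / K := by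
    rcases lt_trichotomy D 0 with h | h | h
    · have hsD : Real.sin D ≤ 0 := by
        have := Real.sin_nonneg_of_nonneg_of_le_pi (x := -D) (by linarith) (by linarith)
        rw [Real.sin_neg] at this; linarith
      rw [hD', Real.sign_of_neg h,
        show D - (-1 : ℝ) * Real.arccos c = D + Real.arccos c from by ring,
        Real.cos_add, hcosA, hsinA, abs_of_nonpos hsD, hc]
      field_simp
      linear_combination km * Real.sin_sq_add_cos_sq D
    · have hc0 : Real.cos D = 1 := by rw [h, Real.cos_zero]
      have hKeq : K = kb + km := by
        rw [hK, hc0, show kb ^ 2 + km ^ 2 + 2 * kb * km * 1 = (kb + km) ^ 2 from by ring,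
          Real.sqrt_sq (by positivity)]
      rw [hD', h, Real.sign_zero, zero_mul, sub_zero, Real.cos_zero, hKeq]
      field_simp
    · have hsD : 0 ≤ Real.sin D := Real.sin_nonneg_of_nonneg_of_le_pi h.le hD2.le
      rw [hD', Real.sign_of_pos h, one_mul, Real.cos_sub, hcosA, hsinA,
        abs_of_nonneg hsD, hc]
      field_simp
      linear_combination km * Real.sin_sq_add_cos_sq D
  have hDrange : -Real.pi < D' ∧ D' < Real.pi := by
    rcases lt_trichotomy D 0 with h | h | h
    · rw [hD', Real.sign_of_neg h]
      constructor <;> linarith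
    · rw [hD', h, Real.sign_zero, zero_mul, sub_zero]
      constructor <;> linarith
    · rw [hD', Real.sign_of_pos h, one_mul]
      constructor <;> linarith
  refine ⟨hKpos, hDrange.1, hDrange.2, ?_⟩
  rw [hcosD']
  have e1 : 1 - (kb * Real.cos D + km) / K = (K - (kb * Real.cos D + km)) / K := by
    field_simp
  rw [e1, div_le_iff₀ hKpos]
  have hKle : K ≤ kb + km := by
    have h7 : kb ^ 2 + km ^ 2 + 2 * kb * km * Real.cos D ≤ (kb + km) ^ 2 := by
      nlinarith [mul_pos hkb hkm]
    calc K = Real.sqrt (kb ^ 2 + km ^ 2 + 2 * kb * km * Real.cos D) := hK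
      _ ≤ Real.sqrt ((kb + km) ^ 2) := Real.sqrt_le_sqrt h7
      _ = kb + km := Real.sqrt_sq (by positivity)
  have hKM : K ≤ M := hKle.trans hM
  have hM0 : 0 < M := lt_of_lt_of_le (by positivity) hM
  have hN : eps / 4 * (km * (1 - Real.cos D)) ≤ km + Real.cos D * (kb - K) := by
    rcases le_or_gt 0 (Real.cos D) with h | h
    · nlinarith [hKle]
    · nlinarith [h1]
  have key : eps * beta1 / (4 * M) * ((1 - Real.cos D) * K)
      ≤ eps / 4 * (km * (1 - Real.cos D)) := by
    have h3 : eps * beta1 / (4 * M) * ((1 - Real.cos D) * K)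
        ≤ eps * beta1 / (4 * M) * ((1 - Real.cos D) * M) := by
      have h0 : (0:ℝ) ≤ eps * beta1 / (4 * M) := by positivity
      gcongr
    have h4 : eps * beta1 / (4 * M) * ((1 - Real.cos D) * M)
        = eps / 4 * (beta1 * (1 - Real.cos D)) := by
      field_simp
    have h5 : eps / 4 * (beta1 * (1 - Real.cos D)) ≤ eps / 4 * (km * (1 - Real.cos D)) := by
      gcongr
    linarith [h3, h4 ▸ h3, h5]
  nlinarith [hN, key]

set_option maxHeartbeats 1000000 in
/-- Theorem 10 (almost-global exponential stability of the right-invariant-error filter for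
single-axis rotation with noise-free measurements): the estimation error
`‖R_k - R̂_k‖_F = 2(1 - cos Δ_k)` decays exponentially. -/
theorem stmt19 (alpha1 alpha2 beta1 beta2 epsilon kappa0 Delta0 : ℝ)
    (ha1 : 0 < alpha1) (ha : alpha1 < alpha2)
    (hb1 : 0 < beta1) (hb : beta1 < beta2)
    (he0 : 0 < epsilon) (he4 : epsilon < 4)
    (hk0 : 0 < kappa0)
    (hD0l : -Real.pi < Delta0) (hD0r : Delta0 ≤ Real.pi)
    (hD0e : 2 * (1 - Real.cos Delta0) ≤ 4 - epsilon)
    (sigma kappam kappa Delta : ℕ → ℝ)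
    (hs : ∀ k : ℕ, 1 ≤ k → alpha1 < sigma k ∧ sigma k < alpha2)
    (hkm : ∀ k : ℕ, 1 ≤ k → beta1 < kappam k ∧ kappam k < beta2)
    (hinit_k : kappa 0 = kappa0) (hinit_D : Delta 0 = Delta0)
    (hrec : ∀ k : ℕ,
      kappa (k + 1) =
        Real.sqrt ((kappa k / (1 + 2 * kappa k * sigma (k + 1))) ^ 2 +
          kappam (k + 1) ^ 2 +
          2 * (kappa k / (1 + 2 * kappa k * sigma (k + 1))) * kappam (k + 1) *
            Real.cos (Delta k)) ∧
      Delta (k + 1) =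
        Delta k - Real.sign (Delta k) *
          Real.arccos ((kappa k / (1 + 2 * kappa k * sigma (k + 1)) +
            kappam (k + 1) * Real.cos (Delta k)) / kappa (k + 1))) :
    ∃ C f : ℝ, 0 < C ∧ 0 < f ∧ f < 1 ∧
      ∀ k : ℕ, 2 * (1 - Real.cos (Delta k)) ≤
        C * f ^ k * (2 * (1 - Real.cos Delta0)) := by
  have hpi := Real.pi_pos
  set M : ℝ := 1 / (2 * alpha1) + beta2 with hMdef
  have h01 : 0 < 1 / (2 * alpha1) := one_div_pos.mpr (by linarith)
  have hM0 : 0 < M := by rw [hMdef]; linarith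
  have hb2M : beta2 < M := by rw [hMdef]; linarith
  set f : ℝ := 1 - epsilon * beta1 / (4 * M) with hfdef
  have hq0 : 0 < epsilon * beta1 / (4 * M) := by positivity
  have hf1 : f < 1 := by rw [hfdef]; linarith
  have hf0 : 0 < f := by
    have hlt : epsilon * beta1 / (4 * M) < 1 := by
      rw [div_lt_one (by positivity)]
      nlinarith
    rw [hfdef]; linarith
  have hcos0nn : 0 ≤ 1 - Real.cos Delta0 := by
    have := Real.cos_le_one Delta0; linarith
  have hcos0e : 1 - Real.cos Delta0 ≤ 2 - epsilon / 2 := by linarith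
  have hD0pi : Delta0 < Real.pi := by
    rcases lt_or_eq_of_le hD0r with h | h
    · exact h
    · rw [h, Real.cos_pi] at hD0e; linarith
  have inv : ∀ k : ℕ, (-Real.pi < Delta k ∧ Delta k < Real.pi ∧ 0 < kappa k) ∧
      1 - Real.cos (Delta k) ≤ f ^ k * (1 - Real.cos Delta0) := by
    intro k
    induction k with
    | zero =>
      rw [hinit_D, hinit_k, pow_zero, one_mul]
      exact ⟨⟨hD0l, hD0pi, hk0⟩, le_refl _⟩
    | succ k ih =>
      obtain ⟨⟨hl, hr, hκ⟩, hbnd⟩ := ih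
      obtain ⟨hσ1, hσ2⟩ := hs (k + 1) (by omega)
      obtain ⟨hm1, hm2⟩ := hkm (k + 1) (by omega)
      have hden : 0 < 1 + 2 * kappa k * sigma (k + 1) := by nlinarith
      have hkbpos : 0 < kappa k / (1 + 2 * kappa k * sigma (k + 1)) := div_pos hκ hden
      have hkble : kappa k / (1 + 2 * kappa k * sigma (k + 1)) ≤ 1 / (2 * alpha1) := by
        rw [div_le_div_iff₀ hden (by positivity)]
        nlinarith
      have hMle : kappa k / (1 + 2 * kappa k * sigma (k + 1)) + kappam (k + 1) ≤ M := by
        rw [hMdef]; linarith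
      have hfk1 : f ^ k ≤ 1 := pow_le_one₀ hf0.le hf1.le
      have hcd : epsilon / 2 ≤ 1 + Real.cos (Delta k) := by
        have h8 : 1 - Real.cos (Delta k) ≤ 1 - Real.cos Delta0 := by
          calc 1 - Real.cos (Delta k) ≤ f ^ k * (1 - Real.cos Delta0) := hbnd
            _ ≤ 1 * (1 - Real.cos Delta0) := by
              exact mul_le_mul_of_nonneg_right hfk1 hcos0nn
            _ = 1 - Real.cos Delta0 := one_mul _
        linarith
      obtain ⟨hre1, hre2⟩ := hrec k
      obtain ⟨hK, hl', hr', hstep⟩ := step_lemma epsilon beta1 M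
        (kappa k / (1 + 2 * kappa k * sigma (k + 1))) (kappam (k + 1))
        (kappa (k + 1)) (Delta k) (Delta (k + 1))
        he0 he4 hkbpos hb1 hm1.le hMle hl hr hcd hre1 hre2
      refine ⟨⟨hl', hr', hK⟩, ?_⟩
      calc 1 - Real.cos (Delta (k + 1)) ≤ f * (1 - Real.cos (Delta k)) := hstep
        _ ≤ f * (f ^ k * (1 - Real.cos Delta0)) := by
          exact mul_le_mul_of_nonneg_left hbnd hf0.le
        _ = f ^ (k + 1) * (1 - Real.cos Delta0) := by ring
  refine ⟨1, f, one_pos, hf0, hf1, fun k => ?_⟩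
  have h9 := (inv k).2
  have h10 : 0 ≤ f ^ k := by positivity
  nlinarith [h9]
end
end
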